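/- arXiv:2310.16143 — 3 statements merged into one kernel-verified Lean document; each statement's English description precedes it below -/
import Mathlib

section
/- Suppose C²-smooth functions g_i : ℝ^d → ℝ (i = 1,…,s, with positive masses m_i) are such that for each pair (i,j) and all v, v_* ∈ ℝ^d there is a scalar λ_{ij}(v,v_*) with (1/m_i)∇g_i(v) − (1/m_j)∇g_j(v_*) = λ_{ij}(v,v_*)(v − v_*), and suppose additionally the g_i are C³ and d ≥ 2. Then each g_i is a quadratic polynomial of the form g_i(v) = λ_i^{(0)} + m_i λ^{(1)}·v + m_i λ^{(2)}|v|²/2, where λ_i^{(0)}, λ^{(2)} ∈ ℝ and λ^{(1)} ∈ ℝ^d are independent of v, and λ^{(1)}, λ^{(2)} are independent of i. -/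
open scoped RealInnerProductSpace

/-- if `(1/m_i)∇g_i(v) − (1/m_j)∇g_j(v_*)` is always parallel to `v − v_*`,
and the `g_i` are `C³` with `d ≥ 2`, then each `g_i` is a quadratic polynomial
`g_i(v) = λ_i⁰ + m_i λ¹·v + m_i λ² |v|²/2` with `λ¹, λ²` independent of `i`. -/
theorem quadratic_from_kernel_condition (d s : ℕ) (hd : 2 ≤ d) (hs : 1 ≤ s)
    (m : Fin s → ℝ) (hm : ∀ i, 0 < m i)
    (g : Fin s → EuclideanSpace ℝ (Fin d) → ℝ)
    (hg : ∀ i, ContDiff ℝ 3 (g i))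
    (hker : ∀ i j : Fin s, ∀ v vs : EuclideanSpace ℝ (Fin d),
      ∃ lam : ℝ, (1 / m i) • gradient (g i) v - (1 / m j) • gradient (g j) vs
        = lam • (v - vs)) :
    ∃ (lam0 : Fin s → ℝ) (lam1 : EuclideanSpace ℝ (Fin d)) (lam2 : ℝ),
      ∀ i v, g i v = lam0 i + m i * ⟪lam1, v⟫ + m i * lam2 * ‖v‖ ^ 2 / 2 := by
  have i0 : Fin s := ⟨0, hs⟩
  set F : EuclideanSpace ℝ (Fin d) → EuclideanSpace ℝ (Fin d) := fun v => (1 / m i0) • gradient (g i0) v with hF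
  -- all species have the same normalized gradient
  have stepA : ∀ i v, (1 / m i) • gradient (g i) v = F v := by
    intro i v
    obtain ⟨lam, hl⟩ := hker i i0 v v
    have h0 : (1 / m i) • gradient (g i) v - F v = 0 := by
      rw [hF]; simpa using hl
    exact sub_eq_zero.mp h0
  set G : EuclideanSpace ℝ (Fin d) → EuclideanSpace ℝ (Fin d) := fun v => F v - F 0 with hG
  -- increments are parallel
  have stepB : ∀ v w : EuclideanSpace ℝ (Fin d), ∃ t : ℝ, G v - G w = t • (v - w) := by
    intro v w
    obtain ⟨t, ht⟩ := hker i0 i0 v w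
    refine ⟨t, ?_⟩
    rw [hG]
    simp only
    rw [show F v - F 0 - (F w - F 0) = F v - F w by abel]
    exact ht
  have stepC : ∀ v : EuclideanSpace ℝ (Fin d), ∃ a : ℝ, G v = a • v := by
    intro v
    obtain ⟨t, ht⟩ := stepB v 0
    refine ⟨t, ?_⟩
    simpa [hG] using ht
  choose a ha using stepC
  -- key: the coefficients agree on "independent" pairs
  have key : ∀ v w : EuclideanSpace ℝ (Fin d), (∀ α β : ℝ, α • v + β • w = 0 → α = 0 ∧ β = 0) →
      a v = a w := by
    intro v w hind
    obtain ⟨t, ht⟩ := stepB v w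
    rw [ha v, ha w] at ht
    have h1 : (a v - t) • v + (t - a w) • w = 0 := by
      have : (a v - t) • v + (t - a w) • w
          = (a v • v - a w • w) - t • (v - w) := by module
      rw [this, ht, sub_self]
    obtain ⟨h2, h3⟩ := hind _ _ h1
    linarith [h2, h3]
  -- coefficients agree on all nonzero pairs
  have hfr : Module.finrank ℝ (EuclideanSpace ℝ (Fin d)) = d := finrank_euclideanSpace_fin
  have hpair : ∀ v w : EuclideanSpace ℝ (Fin d), v ≠ 0 → w ≠ 0 → a v = a w := by
    intro v w hv hw
    have hindep : ∀ u : EuclideanSpace ℝ (Fin d), u ∉ Submodule.span ℝ ({v} : Set (EuclideanSpace ℝ (Fin d))) →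
        ∀ α β : ℝ, α • v + β • u = 0 → α = 0 ∧ β = 0 := by
      intro u hu α β h
      by_cases hβ : β = 0
      · subst hβ
        simp only [zero_smul, add_zero] at h
        rcases smul_eq_zero.mp h with h' | h'
        · exact ⟨h', rfl⟩
        · exact absurd h' hv
      · exfalso
        apply hu
        have h2 : u = (-α / β) • v := by
          have h3 : β • u = (-α) • v := by
            have : α • v + β • u - α • v = 0 - α • v := by rw [h]
            simpa [neg_smul] using this.trans (by abel)
          have := congrArg (fun x => (β⁻¹ : ℝ) • x) h3
          simpa [smul_smul, inv_mul_cancel₀ hβ, div_eq_inv_mul, neg_div,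
            mul_comm] using this
        rw [h2]
        exact Submodule.smul_mem _ _ (Submodule.mem_span_singleton_self v)
    by_cases hdep : ∃ t : ℝ, w = t • v
    · obtain ⟨t, rfl⟩ := hdep
      have ht : t ≠ 0 := by
        rintro rfl; simp at hw
      -- find u outside span{v}
      have hne : Submodule.span ℝ ({v} : Set (EuclideanSpace ℝ (Fin d))) ≠ ⊤ := by
        intro hsp
        have h1 : Module.finrank ℝ (Submodule.span ℝ ({v} : Set (EuclideanSpace ℝ (Fin d)))) = 1 :=
          finrank_span_singleton hv
        rw [hsp, finrank_top] at h1
        omega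
      obtain ⟨u, hu⟩ : ∃ u, u ∉ Submodule.span ℝ ({v} : Set (EuclideanSpace ℝ (Fin d))) := by
        by_contra hc
        push_neg at hc
        exact hne (Submodule.eq_top_iff'.mpr hc)
      have hind1 := hindep u hu
      have hind2 : ∀ α β : ℝ, α • (t • v) + β • u = 0 → α = 0 ∧ β = 0 := by
        intro α β h
        rw [smul_smul] at h
        obtain ⟨h1, h2⟩ := hind1 (α * t) β h
        exact ⟨by
          rcases mul_eq_zero.mp h1 with h' | h'
          · exact h'
          · exact absurd h' ht, h2⟩
      rw [key v u hind1, key (t • v) u hind2]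
    · push_neg at hdep
      apply key
      intro α β h
      by_cases hβ : β = 0
      · subst hβ
        simp only [zero_smul, add_zero] at h
        rcases smul_eq_zero.mp h with h' | h'
        · exact ⟨h', rfl⟩
        · exact absurd h' hv
      · exfalso
        apply hdep (-α / β)
        have h3 : β • w = (-α) • v := by
          have : α • v + β • w - α • v = 0 - α • v := by rw [h]
          simpa [neg_smul] using this.trans (by abel)
        have := congrArg (fun x => (β⁻¹ : ℝ) • x) h3
        simpa [smul_smul, inv_mul_cancel₀ hβ, div_eq_inv_mul, neg_div,
          mul_comm] using this
  -- a fixed nonzero vector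
  have hd0 : 0 < d := by omega
  set e1 : EuclideanSpace ℝ (Fin d) := EuclideanSpace.single (⟨0, hd0⟩ : Fin d) (1 : ℝ) with he1def
  have he1 : e1 ≠ 0 := by
    intro h
    have h2 := congrArg (fun x : EuclideanSpace ℝ (Fin d) => ‖x‖) h
    simp [he1def, EuclideanSpace.norm_single] at h2
  set c : ℝ := a e1 with hc'
  have hc : ∀ v : EuclideanSpace ℝ (Fin d), G v = c • v := by
    intro v
    by_cases hv : v = 0
    · subst hv
      simp [hG]
    · rw [ha v, hpair v e1 hv he1]
  -- gradient formula
  set b : EuclideanSpace ℝ (Fin d) := F 0 with hb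
  have hgradeq : ∀ i v, gradient (g i) v = m i • (c • v + b) := by
    intro i v
    have hA := stepA i v
    have hFv : F v = c • v + b := by
      have := hc v
      rw [hG] at this
      simp only at this
      rw [sub_eq_iff_eq_add] at this
      rw [this, hb]
    rw [hFv] at hA
    have := congrArg (fun x => m i • x) hA
    simpa [smul_smul, smul_add, mul_one_div, mul_inv_cancel₀ (hm i).ne'] using this
  -- conclude by integrating
  refine ⟨fun i => g i 0, b, c, ?_⟩
  intro i v
  have hdiff : Differentiable ℝ (g i) := (hg i).differentiable (by norm_num)
  have hfd : ∀ x : EuclideanSpace ℝ (Fin d), HasFDerivAt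
      (fun u : EuclideanSpace ℝ (Fin d) => g i u - (m i * ⟪b, u⟫ + (m i * c / 2) * ‖u‖ ^ 2))
      (0 : EuclideanSpace ℝ (Fin d) →L[ℝ] ℝ) x := by
    intro x
    have h1 : HasFDerivAt (g i) ((InnerProductSpace.toDual ℝ (EuclideanSpace ℝ (Fin d))) (gradient (g i) x)) x :=
      (hdiff x).hasGradientAt.hasFDerivAt
    have h2 : HasFDerivAt (fun u : EuclideanSpace ℝ (Fin d) => ⟪b, u⟫) (innerSL ℝ b) x :=
      (innerSL ℝ b).hasFDerivAt
    have h3 : HasFDerivAt (fun u : EuclideanSpace ℝ (Fin d) => ‖u‖ ^ 2) (2 • (innerSL ℝ x)) x :=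
      (hasStrictFDerivAt_norm_sq x).hasFDerivAt
    have h4 := (h2.const_mul (m i)).add (h3.const_mul (m i * c / 2))
    have h5 := h1.sub h4
    have hkey : (InnerProductSpace.toDual ℝ (EuclideanSpace ℝ (Fin d))) (gradient (g i) x)
        - ((m i) • innerSL ℝ b + (m i * c / 2) • (2 • innerSL ℝ x)) = 0 := by
      ext w
      simp only [ContinuousLinearMap.sub_apply, ContinuousLinearMap.add_apply,
        ContinuousLinearMap.smul_apply, ContinuousLinearMap.zero_apply,
        InnerProductSpace.toDual_apply_apply, innerSL_apply_apply, hgradeq i x]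
      rw [real_inner_smul_left, inner_add_left, real_inner_smul_left]
      simp only [smul_eq_mul]
      ring
    rw [hkey] at h5
    exact h5
  have hconst := is_const_of_fderiv_eq_zero (𝕜 := ℝ)
    (fun x => (hfd x).differentiableAt) (fun x => (hfd x).fderiv) v 0
  simp only [inner_zero_right, norm_zero, mul_zero, zero_pow, ne_eq,
    OfNat.ofNat_ne_zero, not_false_eq_true, add_zero, sub_zero] at hconst
  show g i v = g i 0 + m i * ⟪b, v⟫ + m i * c * ‖v‖ ^ 2 / 2
  linear_combination hconst
end

section
/- If, in the setting of the previous kernel condition, for each i and all v, v_* one has (1/m_i)∇g_i(v) − (1/m_i)∇g_i(v_*) = λ(v,v_*)(v−v_*) for some scalar λ, and g_i is C³ with d ≥ 2, then the Hessian of g_i is a constant multiple of the identity: ∂_{v_ℓ}∂_{v_k} g_i = m_i λ^{(2)} δ_{kℓ} for some constant λ^{(2)}. -/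
/-!
Write `G = (1/m) ∇g` and `G v - G 0 = a(v) v`. Comparing the increments of `G` at two linearly
independent points `v, w` with the increment `G v - G w = λ (v - w)` forces `a(v) = λ = a(w)`.
Since `d ≥ 2`, any two nonzero vectors are linked by such comparisons, so `a` is constant on
`v ≠ 0`. Hence `∇g` is affine with linear part a multiple of the identity, and so is its
derivative, the Hessian.
-/

def ParallelIncrements (K : Type*) {E : Type*} [Field K] [AddCommGroup E] [Module K E]
    (G : E → E) : Prop :=
  ∀ v w : E, ∃ l : K, G v - G w = l • (v - w)

namespace ParallelIncrements

variable {K E : Type*} [Field K] [AddCommGroup E] [Module K E] {G : E → E}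

theorem exists_sub_eq_smul (hG : ParallelIncrements K G) (v : E) :
    ∃ a : K, G v - G 0 = a • v := by
  simpa using hG v 0

theorem eq_of_linearIndependent (hG : ParallelIncrements K G) {v w : E}
    (hvw : LinearIndependent K ![v, w]) {a b : K}
    (ha : G v - G 0 = a • v) (hb : G w - G 0 = b • w) : a = b := by
  obtain ⟨l, hl⟩ := hG v w
  have hcomb : (a - l) • v + (l - b) • w = 0 := by
    linear_combination (norm := module) hb + hl - ha
  obtain ⟨hal, hlb⟩ := LinearIndependent.pair_iff.1 hvw _ _ hcomb
  exact (sub_eq_zero.1 hal).trans (sub_eq_zero.1 hlb)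

theorem exists_eq_add_smul (hG : ParallelIncrements K G) (hE : 1 < Module.rank K E) :
    ∃ c : K, ∀ v, G v = G 0 + c • v := by
  choose a ha using hG.exists_sub_eq_smul
  obtain ⟨u, hu⟩ := rank_pos_iff_exists_ne_zero.1 (zero_lt_one.trans hE)
  have hconst : ∀ v, v ≠ 0 → a v = a u := by
    intro v hv
    by_cases huv : LinearIndependent K ![u, v]
    · exact (hG.eq_of_linearIndependent huv (ha u) (ha v)).symm
    obtain ⟨s, rfl⟩ : ∃ s : K, s • u = v := by
      simpa [LinearIndependent.pair_iff' hu] using huv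
    have hs : s ≠ 0 := by rintro rfl; simp at hv
    obtain ⟨w, huw⟩ := exists_linearIndependent_pair_of_one_lt_rank hE hu
    have hvw : LinearIndependent K ![s • u, w] := by
      simpa using (LinearIndependent.pair_smul_smul_iff hs.isUnit isUnit_one).2 huw
    exact (hG.eq_of_linearIndependent hvw (ha _) (ha w)).trans
      (hG.eq_of_linearIndependent huw (ha u) (ha w)).symm
  refine ⟨a u, fun v => ?_⟩
  rcases eq_or_ne v 0 with rfl | hv
  · simp
  · rw [← hconst v hv, ← ha v, add_sub_cancel]

end ParallelIncrements

theorem fderiv_const_add_smul {𝕜 E : Type*} [NontriviallyNormedField 𝕜] [NormedAddCommGroup E]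
    [NormedSpace 𝕜 E] (a : E) (c : 𝕜) (x : E) :
    fderiv 𝕜 (fun v => a + c • v) x = c • ContinuousLinearMap.id 𝕜 E :=
  (((hasFDerivAt_id x).const_smul c).const_add a).fderiv

theorem hessian_multiple_of_identity_general (d : ℕ) (hd : 2 ≤ d) (m : ℝ) (hm : 0 < m)
    (g : EuclideanSpace ℝ (Fin d) → ℝ)
    (hker : ∀ v vs : EuclideanSpace ℝ (Fin d),
      ∃ lam : ℝ, (1 / m) • gradient g v - (1 / m) • gradient g vs = lam • (v - vs)) :
    ∃ lam2 : ℝ, ∀ v : EuclideanSpace ℝ (Fin d),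
      fderiv ℝ (gradient g) v
        = (m * lam2) • ContinuousLinearMap.id ℝ (EuclideanSpace ℝ (Fin d)) := by
  have hrank : 1 < Module.rank ℝ (EuclideanSpace ℝ (Fin d)) := by
    rw [← Module.finrank_eq_rank, finrank_euclideanSpace_fin]
    exact_mod_cast hd
  obtain ⟨c, hc⟩ := ParallelIncrements.exists_eq_add_smul (G := fun v => (1 / m) • gradient g v)
    hker hrank
  have hgrad : gradient g = fun v => gradient g 0 + (m * c) • v := by
    funext v
    simpa [smul_add, smul_smul, hm.ne'] using congrArg (m • ·) (hc v)
  refine ⟨c, fun v => ?_⟩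
  rw [hgrad, fderiv_const_add_smul]

/-- if `∇g(v) − ∇g(v_*)` is always parallel to `v − v_*` and `g` is `C³`,
`d ≥ 2`, then the Hessian of `g` is a constant multiple of the identity:
`fderiv ℝ (gradient g) v = (m λ²) • id` for some constant `λ²`. -/
theorem hessian_multiple_of_identity (d : ℕ) (hd : 2 ≤ d) (m : ℝ) (hm : 0 < m)
    (g : EuclideanSpace ℝ (Fin d) → ℝ) (hg : ContDiff ℝ 3 g)
    (hker : ∀ v vs : EuclideanSpace ℝ (Fin d),
      ∃ lam : ℝ, (1 / m) • gradient g v - (1 / m) • gradient g vs = lam • (v - vs)) :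
    ∃ lam2 : ℝ, ∀ v : EuclideanSpace ℝ (Fin d),
      fderiv ℝ (gradient g) v
        = (m * lam2) • ContinuousLinearMap.id ℝ (EuclideanSpace ℝ (Fin d)) :=
  hessian_multiple_of_identity_general d hd m hm g hker
end

section
/- If f is the Maxwellian f(v) = n (m/(2πT'))^{d/2} exp(−m|v−u|²/(2T')) with T' = T − mε > 0, then ψ^ε * log(ψ^ε * f) is a quadratic polynomial: (ψ^ε * log(ψ^ε * f))(v) = λ^{(0)} + m λ^{(1)}·v + m λ^{(2)}|v|²/2 where λ^{(2)} = −1/T, λ^{(1)} = u/T. -/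
/-!
The Maxwellian is `n ψ^σ(· - u)` with `σ = T'/m`, and Gaussian mollifiers form a semigroup under
convolution, `ψ^ε * ψ^σ = ψ^(ε+σ)`, so `ψ^ε * f = n ψ^(T/m)(· - u)`. Its logarithm is a constant
minus `m |w - u|² / (2T)`, and mollifying a quadratic with the centred probability density `ψ^ε`
only shifts its constant term by the second moment of `ψ^ε`.
-/

open scoped RealInnerProductSpace
open MeasureTheory

/-- The Gaussian mollifier `ψ^ε(v) = (2πε)^{-d/2} exp(−|v|²/(2ε))` on `ℝ^d`. -/
noncomputable def gaussMollifier (d : ℕ) (ε : ℝ) (v : EuclideanSpace ℝ (Fin d)) : ℝ :=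
  (2 * Real.pi * ε) ^ (-(d : ℝ) / 2) * Real.exp (-‖v‖ ^ 2 / (2 * ε))

open Real

section GaussianIntegrals

variable {V : Type*} [NormedAddCommGroup V] [InnerProductSpace ℝ V] [FiniteDimensional ℝ V]
  [MeasurableSpace V] [BorelSpace V]

theorem integral_rexp_neg_mul_sq_norm_add_inner {b : ℝ} (hb : 0 < b) (c : ℝ) (w : V) :
    ∫ v : V, exp (-b * ‖v‖ ^ 2 + c * ⟪w, v⟫) =
      (π / b) ^ ((Module.finrank ℝ V : ℝ) / 2) * exp (c ^ 2 * ‖w‖ ^ 2 / (4 * b)) := by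
  have h := GaussianFourier.integral_cexp_neg_mul_sq_norm_add (V := V)
    (b := (b : ℂ)) (by simpa using hb) (c : ℂ) w
  rw [← Complex.ofReal_inj, ← integral_complex_ofReal, Complex.ofReal_mul,
    Complex.ofReal_cpow (by positivity), Complex.ofReal_exp]
  push_cast
  exact h

theorem integrable_rexp_neg_mul_sq_norm {b : ℝ} (hb : 0 < b) :
    Integrable fun v : V => exp (-b * ‖v‖ ^ 2) := by
  have h := (GaussianFourier.integrable_cexp_neg_mul_sq_norm_add (V := V)
    (b := (b : ℂ)) (by simpa using hb) 0 0).norm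
  refine h.congr (.of_forall fun v => ?_)
  simp [Complex.norm_exp, ← Complex.ofReal_pow]

theorem integrable_sq_norm_mul_rexp_neg_mul_sq_norm {b : ℝ} (hb : 0 < b) :
    Integrable fun v : V => ‖v‖ ^ 2 * exp (-b * ‖v‖ ^ 2) := by
  refine ((integrable_rexp_neg_mul_sq_norm (V := V) (half_pos hb)).const_mul (2 / b)).mono'
    (by fun_prop) (.of_forall fun v => ?_)
  set t := b / 2 * ‖v‖ ^ 2
  have ht : t ≤ exp t := by linarith [add_one_le_exp t]
  rw [norm_of_nonneg (by positivity)]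
  calc ‖v‖ ^ 2 * exp (-b * ‖v‖ ^ 2) = 2 / b * (t * exp (-(2 * t))) := by
        simp only [t]; field_simp
    _ ≤ 2 / b * (exp t * exp (-(2 * t))) := by gcongr
    _ = 2 / b * exp (-(b / 2) * ‖v‖ ^ 2) := by rw [← exp_add]; congr 2; ring

end GaussianIntegrals

section Mollifier

variable {d : ℕ} {ε : ℝ}

theorem gaussMollifier_eq_mul_exp (v : EuclideanSpace ℝ (Fin d)) :
    gaussMollifier d ε v = (2 * π * ε) ^ (-(d : ℝ) / 2) * exp (-(1 / (2 * ε)) * ‖v‖ ^ 2) := by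
  rw [gaussMollifier]; ring_nf

theorem continuous_gaussMollifier : Continuous (gaussMollifier d ε) := by
  unfold gaussMollifier; fun_prop

theorem gaussMollifier_pos (hε : 0 < ε) (v : EuclideanSpace ℝ (Fin d)) :
    0 < gaussMollifier d ε v := by
  rw [gaussMollifier]; positivity

theorem log_gaussMollifier (hε : 0 < ε) (v : EuclideanSpace ℝ (Fin d)) :
    log (gaussMollifier d ε v) = log ((2 * π * ε) ^ (-(d : ℝ) / 2)) - ‖v‖ ^ 2 / (2 * ε) := by
  rw [gaussMollifier, log_mul (by positivity) (exp_ne_zero _), log_exp]; ring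

theorem integrable_gaussMollifier (hε : 0 < ε) : Integrable (gaussMollifier d ε) := by
  simp_rw [funext (gaussMollifier_eq_mul_exp (d := d) (ε := ε))]
  exact (integrable_rexp_neg_mul_sq_norm (by positivity)).const_mul _

theorem integral_gaussMollifier (hε : 0 < ε) : ∫ v, gaussMollifier d ε v = 1 := by
  simp_rw [gaussMollifier_eq_mul_exp]
  rw [integral_const_mul, GaussianFourier.integral_rexp_neg_mul_sq_norm (by positivity),
    finrank_euclideanSpace_fin, show π / (1 / (2 * ε)) = 2 * π * ε by field_simp,
    ← rpow_add (by positivity), neg_div, neg_add_cancel, rpow_zero]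

theorem integrable_gaussMollifier_mul_sq_norm (hε : 0 < ε) :
    Integrable fun v => gaussMollifier d ε v * ‖v‖ ^ 2 := by
  refine ((integrable_sq_norm_mul_rexp_neg_mul_sq_norm (b := 1 / (2 * ε)) (by positivity)).const_mul
    ((2 * π * ε) ^ (-(d : ℝ) / 2))).congr (.of_forall fun v => ?_)
  simp only [gaussMollifier_eq_mul_exp]; ring

theorem integrable_gaussMollifier_mul_inner (hε : 0 < ε) (a : EuclideanSpace ℝ (Fin d)) :
    Integrable fun v => gaussMollifier d ε v * ⟪a, v⟫ := by
  refine (((integrable_gaussMollifier hε).const_mul (‖a‖ ^ 2)).add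
    (integrable_gaussMollifier_mul_sq_norm hε)).mono'
    (continuous_gaussMollifier.mul (by fun_prop)).aestronglyMeasurable (.of_forall fun v => ?_)
  have hψ := (gaussMollifier_pos hε v).le
  have : |⟪a, v⟫| ≤ ‖a‖ ^ 2 + ‖v‖ ^ 2 := by
    nlinarith [abs_real_inner_le_norm a v, sq_nonneg (‖a‖ - ‖v‖), norm_nonneg a, norm_nonneg v]
  rw [norm_mul, norm_of_nonneg hψ, norm_eq_abs, Pi.add_apply]
  nlinarith

theorem integral_gaussMollifier_mul_inner (a : EuclideanSpace ℝ (Fin d)) :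
    ∫ v, gaussMollifier d ε v * ⟪a, v⟫ = 0 := by
  have h := integral_neg_eq_self (fun v => gaussMollifier d ε v * ⟪a, v⟫) volume
  simp only [gaussMollifier, norm_neg, inner_neg_right, mul_neg, integral_neg] at h ⊢
  linarith

theorem integral_gaussMollifier_sub_mul_quadratic (hε : 0 < ε) (C k : ℝ)
    (u v : EuclideanSpace ℝ (Fin d)) :
    ∫ w, gaussMollifier d ε (v - w) * (C - k * ‖w - u‖ ^ 2) =
      C - k * (‖v - u‖ ^ 2 + ∫ z, gaussMollifier d ε z * ‖z‖ ^ 2) := by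
  rw [← integral_sub_left_eq_self (fun w => gaussMollifier d ε (v - w) * (C - k * ‖w - u‖ ^ 2))
    volume v]
  have expand : ∀ z, gaussMollifier d ε (v - (v - z)) * (C - k * ‖v - z - u‖ ^ 2) =
      (C - k * ‖v - u‖ ^ 2) * gaussMollifier d ε z + 2 * k * (gaussMollifier d ε z * ⟪v - u, z⟫)
        - k * (gaussMollifier d ε z * ‖z‖ ^ 2) := by
    intro z
    rw [sub_sub_cancel, sub_right_comm, norm_sub_sq_real]
    ring
  have h₀ := (integrable_gaussMollifier (d := d) hε).const_mul (C - k * ‖v - u‖ ^ 2)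
  have h₁ := (integrable_gaussMollifier_mul_inner hε (v - u)).const_mul (2 * k)
  have h₂ := (integrable_gaussMollifier_mul_sq_norm (d := d) hε).const_mul k
  simp_rw [expand]
  rw [integral_sub (h₀.fun_add h₁) h₂, integral_add h₀ h₁, integral_const_mul, integral_const_mul,
    integral_const_mul, integral_gaussMollifier hε, integral_gaussMollifier_mul_inner]
  ring

/-- Completing the square in `x`. -/
theorem gaussMollifier_sub_mul_gaussMollifier {σ : ℝ} (hε : ε ≠ 0) (hσ : σ ≠ 0)
    (w x : EuclideanSpace ℝ (Fin d)) :
    gaussMollifier d ε (w - x) * gaussMollifier d σ x =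
      (2 * π * ε) ^ (-(d : ℝ) / 2) * (2 * π * σ) ^ (-(d : ℝ) / 2) * exp (-‖w‖ ^ 2 / (2 * ε)) *
        exp (-((ε + σ) / (2 * ε * σ)) * ‖x‖ ^ 2 + 1 / ε * ⟪w, x⟫) := by
  have hexp : exp (-‖w - x‖ ^ 2 / (2 * ε)) * exp (-‖x‖ ^ 2 / (2 * σ)) =
      exp (-‖w‖ ^ 2 / (2 * ε)) * exp (-((ε + σ) / (2 * ε * σ)) * ‖x‖ ^ 2 + 1 / ε * ⟪w, x⟫) := by
    rw [← exp_add, ← exp_add, norm_sub_sq_real]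
    congr 1
    field_simp
    ring
  simp only [gaussMollifier]
  linear_combination (2 * π * ε) ^ (-(d : ℝ) / 2) * (2 * π * σ) ^ (-(d : ℝ) / 2) * hexp

theorem integral_gaussMollifier_sub_mul_gaussMollifier {σ : ℝ} (hε : 0 < ε) (hσ : 0 < σ)
    (w : EuclideanSpace ℝ (Fin d)) :
    ∫ x, gaussMollifier d ε (w - x) * gaussMollifier d σ x = gaussMollifier d (ε + σ) w := by
  simp_rw [gaussMollifier_sub_mul_gaussMollifier hε.ne' hσ.ne']
  rw [integral_const_mul, integral_rexp_neg_mul_sq_norm_add_inner (by positivity),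
    finrank_euclideanSpace_fin, gaussMollifier]
  have hconst : (2 * π * ε) ^ (-(d : ℝ) / 2) * (2 * π * σ) ^ (-(d : ℝ) / 2) *
      (π / ((ε + σ) / (2 * ε * σ))) ^ ((d : ℝ) / 2) = (2 * π * (ε + σ)) ^ (-(d : ℝ) / 2) := by
    rw [show π / ((ε + σ) / (2 * ε * σ)) = 2 * π * ε * (2 * π * σ) / (2 * π * (ε + σ)) by
        field_simp, div_rpow (by positivity) (by positivity),
      mul_rpow (x := 2 * π * ε) (by positivity) (by positivity), neg_div, rpow_neg (by positivity),
      rpow_neg (by positivity), rpow_neg (by positivity)]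
    have ha : (2 * π * ε) ^ ((d : ℝ) / 2) ≠ 0 := by positivity
    have hb : (2 * π * σ) ^ ((d : ℝ) / 2) ≠ 0 := by positivity
    generalize (2 * π * ε) ^ ((d : ℝ) / 2) = a at *
    generalize (2 * π * σ) ^ ((d : ℝ) / 2) = b at *
    field_simp
  have hexp : exp (-‖w‖ ^ 2 / (2 * ε)) *
      exp ((1 / ε) ^ 2 * ‖w‖ ^ 2 / (4 * ((ε + σ) / (2 * ε * σ)))) =
        exp (-‖w‖ ^ 2 / (2 * (ε + σ))) := by
    rw [← exp_add]
    congr 1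
    field_simp
    ring
  linear_combination (π / ((ε + σ) / (2 * ε * σ))) ^ ((d : ℝ) / 2) *
    (2 * π * ε) ^ (-(d : ℝ) / 2) * (2 * π * σ) ^ (-(d : ℝ) / 2) * hexp +
    exp (-‖w‖ ^ 2 / (2 * (ε + σ))) * hconst

theorem integral_gaussMollifier_sub_mul_gaussMollifier_sub {σ : ℝ} (hε : 0 < ε) (hσ : 0 < σ)
    (u w : EuclideanSpace ℝ (Fin d)) :
    ∫ x, gaussMollifier d ε (w - x) * gaussMollifier d σ (x - u) =
      gaussMollifier d (ε + σ) (w - u) := by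
  rw [← integral_add_right_eq_self
    (fun x => gaussMollifier d ε (w - x) * gaussMollifier d σ (x - u)) u,
    ← integral_gaussMollifier_sub_mul_gaussMollifier hε hσ]
  simp_rw [add_sub_cancel_right, sub_add_eq_sub_sub_swap]

end Mollifier

/-- if `f` is the Maxwellian with temperature `T' = T − mε > 0`, then
`ψ^ε * log(ψ^ε * f)` is the quadratic polynomial `λ⁰ + mλ¹·v + mλ²|v|²/2`
with `λ² = −1/T` and `λ¹ = u/T`. -/
theorem quadratic_of_maxwellian (d : ℕ) (ε m T n : ℝ)
    (hε : 0 < ε) (hm : 0 < m) (hT : m * ε < T) (hn : 0 < n)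
    (u : EuclideanSpace ℝ (Fin d))
    (f : EuclideanSpace ℝ (Fin d) → ℝ)
    (hf : ∀ v, f v = n * (m / (2 * Real.pi * (T - m * ε))) ^ ((d : ℝ) / 2) *
        Real.exp (-(m * ‖v - u‖ ^ 2) / (2 * (T - m * ε)))) :
    ∃ lam0 : ℝ, ∀ v : EuclideanSpace ℝ (Fin d),
      (∫ w, gaussMollifier d ε (v - w) *
          Real.log (∫ x, gaussMollifier d ε (w - x) * f x))
        = lam0 + m * ⟪(1 / T) • u, v⟫ + m * (-(1 / T)) * ‖v‖ ^ 2 / 2 := by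
  have hT' : 0 < T - m * ε := by linarith
  have hTm : 0 < T / m := div_pos (by nlinarith) hm
  set σ := (T - m * ε) / m with hσ_def
  have hσ : 0 < σ := div_pos hT' hm
  have hεσ : ε + σ = T / m := by rw [hσ_def]; field_simp; ring
  have hf' : ∀ x, f x = n * gaussMollifier d σ (x - u) := by
    intro x
    rw [hf, gaussMollifier, neg_div (2 : ℝ) (d : ℝ), rpow_neg (by positivity),
      ← inv_rpow (by positivity), mul_assoc, hσ_def]
    congr 2 <;> congr 1 <;> field_simp
  have hsmooth : ∀ w,
      ∫ x, gaussMollifier d ε (w - x) * f x = n * gaussMollifier d (T / m) (w - u) := by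
    intro w
    simp_rw [hf', mul_left_comm _ n, integral_const_mul,
      integral_gaussMollifier_sub_mul_gaussMollifier_sub hε hσ, hεσ]
  set C := log n + log ((2 * π * (T / m)) ^ (-(d : ℝ) / 2)) with hC
  have hlog : ∀ w,
      log (n * gaussMollifier d (T / m) (w - u)) = C - m / (2 * T) * ‖w - u‖ ^ 2 := by
    intro w
    rw [log_mul hn.ne' (gaussMollifier_pos hTm _).ne', log_gaussMollifier hTm, hC]
    field_simp
    ring
  refine ⟨C - m / (2 * T) * (‖u‖ ^ 2 + ∫ z, gaussMollifier d ε z * ‖z‖ ^ 2), fun v => ?_⟩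
  simp_rw [hsmooth, hlog, integral_gaussMollifier_sub_mul_quadratic hε, norm_sub_sq_real,
    real_inner_smul_left, real_inner_comm u]
  field_simp
  ring
end
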